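/- The total energy of the sinc waveform over the whole real line equals π: ∫_{−∞}^{∞} (sin t / t)² dt = π. -/

import Mathlib

/-!
The tent function `tent x = max 0 (1 - |x|)` is even, so its Fourier transform is a cosine
integral, which evaluates to `sinc (π w) ^ 2`. Both `tent` and `sinc (π ·) ^ 2` are integrable and
`tent` is continuous, so Fourier inversion at `0` gives `∫ sinc (π w) ^ 2 dw = tent 0 = 1`; the
substitution `t = π w` turns this into `∫ sinc t ^ 2 dt = π`.
-/

open MeasureTheory

noncomputable def sinc (t : ℝ) : ℝ := if t = 0 then 1 else Real.sin t / t

open Set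
open Real hiding sinc
open scoped FourierTransform

lemma sinc_sq_mul_sq (t : ℝ) : sinc t ^ 2 * t ^ 2 = sin t ^ 2 := by
  rcases eq_or_ne t 0 with rfl | ht
  · simp
  · rw [sinc, if_neg ht]
    field_simp

lemma sinc_sq_le (t : ℝ) : sinc t ^ 2 ≤ 2 * (1 + t ^ 2)⁻¹ := by
  rw [le_mul_inv_iff₀ (by positivity), mul_add, mul_one, sinc_sq_mul_sq]
  have hsinc : sinc t ^ 2 ≤ 1 := (sq_le_one_iff_abs_le_one _).2 (Real.abs_sinc_le_one t)
  linarith [sin_sq_le_one t]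

lemma integrable_sinc_sq : Integrable (fun t : ℝ => sinc t ^ 2) := by
  refine (integrable_inv_one_add_sq.const_mul 2).mono' ?_ (ae_of_all _ fun t => ?_)
  · exact (Real.continuous_sinc.pow 2).aestronglyMeasurable
  · rw [norm_of_nonneg (sq_nonneg _)]
    exact sinc_sq_le t

lemma integral_sin_mul_eq_zero_of_even {f : ℝ → ℝ} (heven : ∀ x, f (-x) = f x) (a : ℝ) :
    ∫ v, sin (a * v) * f v = 0 := by
  have h := integral_neg_eq_self (fun v => sin (a * v) * f v) volume
  simp only [mul_neg, sin_neg, heven, neg_mul, integral_neg] at h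
  linarith

theorem fourier_ofReal_of_even {f : ℝ → ℝ} (hf : Integrable f) (heven : ∀ x, f (-x) = f x)
    (w : ℝ) : 𝓕 (fun x => (f x : ℂ)) w = ((∫ v, cos (2 * π * w * v) * f v : ℝ) : ℂ) := by
  have hexp : ∀ v : ℝ, Complex.exp (↑(-2 * π * v * w) * Complex.I) • (f v : ℂ) =
      ((cos (2 * π * w * v) * f v : ℝ) : ℂ) - ((sin (2 * π * w * v) * f v : ℝ) : ℂ) * Complex.I := by
    intro v
    rw [smul_eq_mul, Complex.exp_mul_I, ← Complex.ofReal_cos, ← Complex.ofReal_sin,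
      show -2 * π * v * w = -(2 * π * w * v) by ring, cos_neg, sin_neg]
    push_cast
    ring
  have hbdd : ∀ g : ℝ → ℝ, Continuous g → (∀ x, |g x| ≤ 1) →
      Integrable (fun v => ((g (2 * π * w * v) * f v : ℝ) : ℂ)) := fun g hg hg1 =>
    (hf.bdd_mul (c := 1) (hg.comp (by fun_prop)).aestronglyMeasurable
      (ae_of_all _ fun v => hg1 _)).ofReal
  rw [fourier_real_eq_integral_exp_smul]
  simp_rw [hexp]
  rw [integral_sub (hbdd cos continuous_cos abs_cos_le_one)
      ((hbdd sin continuous_sin abs_sin_le_one).mul_const _), integral_mul_const,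
    integral_complex_ofReal, integral_complex_ofReal, integral_sin_mul_eq_zero_of_even heven]
  simp

theorem Continuous.integral_fourier_eq_apply_zero {V E : Type*} [NormedAddCommGroup V]
    [InnerProductSpace ℝ V] [FiniteDimensional ℝ V] [MeasurableSpace V] [BorelSpace V] [NormedAddCommGroup E]
    [NormedSpace ℂ E] [CompleteSpace E] {f : V → E} (h : Continuous f) (hf : Integrable f)
    (h'f : Integrable (𝓕 f)) : ∫ w, 𝓕 f w = f 0 := by
  simpa [fourierInv_eq] using congrFun (h.fourierInv_fourier_eq hf h'f) 0

noncomputable def tent (x : ℝ) : ℝ := max 0 (1 - |x|)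

lemma continuous_tent : Continuous tent := by unfold tent; fun_prop

lemma tent_neg (x : ℝ) : tent (-x) = tent x := by rw [tent, tent, abs_neg]

lemma hasCompactSupport_tent : HasCompactSupport tent := by
  refine HasCompactSupport.intro (isCompact_Icc (a := -1) (b := 1)) fun x hx => ?_
  rw [tent, max_eq_left]
  rw [mem_Icc, not_and_or, not_le, not_le] at hx
  cases abs_cases x <;> rcases hx with h | h <;> linarith

lemma integrable_tent : Integrable tent :=
  continuous_tent.integrable_of_hasCompactSupport hasCompactSupport_tent

lemma integral_one_sub_mul_cos_eq_sinc_sq (a : ℝ) :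
    2 * ∫ u in (0 : ℝ)..1, (1 - u) * cos (2 * a * u) = sinc a ^ 2 := by
  rcases eq_or_ne a 0 with rfl | ha
  · norm_num [sinc, intervalIntegral.integral_sub intervalIntegrable_const
      intervalIntegral.intervalIntegrable_id]
  have hderiv : ∀ u ∈ uIcc (0 : ℝ) 1, HasDerivAt
      (fun u => (1 - u) * sin (2 * a * u) / (2 * a) - cos (2 * a * u) / (4 * a ^ 2))
      ((1 - u) * cos (2 * a * u)) u := by
    intro u _
    have hlin : HasDerivAt (fun u : ℝ => 2 * a * u) (2 * a) u := by
      simpa using (hasDerivAt_id u).const_mul (2 * a)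
    refine ((((hasDerivAt_id u).const_sub 1).mul ((hasDerivAt_sin _).comp u hlin)).div_const
      (2 * a)).sub (((hasDerivAt_cos _).comp u hlin).div_const (4 * a ^ 2)) |>.congr_deriv ?_
    simp only [id, Function.comp_def]
    field_simp
    ring
  rw [intervalIntegral.integral_eq_sub_of_hasDerivAt hderiv (by
    apply Continuous.intervalIntegrable; fun_prop), sinc, if_neg ha]
  have hcos : cos (2 * a) = 1 - 2 * sin a ^ 2 := by rw [cos_two_mul, cos_sq']; ring
  simp only [mul_zero, mul_one, sin_zero, cos_zero, hcos]
  field_simp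
  ring

lemma integral_cos_mul_tent_eq_sinc_sq (a : ℝ) : ∫ v, cos (2 * a * v) * tent v = sinc a ^ 2 := by
  have habs : ∀ v, cos (2 * a * v) * tent v = cos (2 * a * |v|) * max 0 (1 - |v|) := by
    intro v
    rcases abs_cases v with ⟨hv, -⟩ | ⟨hv, -⟩ <;> rw [tent, hv]
    rw [mul_neg, cos_neg]
  simp_rw [habs]
  rw [integral_comp_abs (f := fun u => cos (2 * a * u) * max 0 (1 - u)),
    ← integral_one_sub_mul_cos_eq_sinc_sq, intervalIntegral.integral_of_le zero_le_one,
    setIntegral_eq_of_subset_of_forall_sdiff_eq_zero measurableSet_Ioi Ioc_subset_Ioi_self]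
  · congr 1
    refine setIntegral_congr_fun measurableSet_Ioc fun u hu => ?_
    rw [max_eq_right (by linarith [hu.2])]
    ring
  · rintro u ⟨hu, hu'⟩
    have hu1 : 1 < u := by simpa [mem_Ioi.1 hu] using hu'
    rw [max_eq_left (by linarith), mul_zero]

lemma fourier_tent (w : ℝ) : 𝓕 (fun x => (tent x : ℂ)) w = ((sinc (π * w) ^ 2 : ℝ) : ℂ) := by
  rw [fourier_ofReal_of_even integrable_tent tent_neg, ← integral_cos_mul_tent_eq_sinc_sq]
  simp_rw [mul_assoc]

lemma integral_sinc_sq_pi_mul : ∫ w, sinc (π * w) ^ 2 = 1 := by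
  have hint : Integrable (𝓕 fun x => (tent x : ℂ)) := by
    rw [funext fourier_tent]
    exact (integrable_sinc_sq.comp_mul_left' pi_ne_zero).ofReal
  have h := Continuous.integral_fourier_eq_apply_zero (f := fun x => (tent x : ℂ))
    (Complex.continuous_ofReal.comp continuous_tent) integrable_tent.ofReal hint
  simp_rw [fourier_tent, integral_complex_ofReal] at h
  rw [show tent 0 = 1 by simp [tent]] at h
  exact_mod_cast h

theorem sinc_total_energy : ∫ t : ℝ, (sinc t) ^ 2 = Real.pi := by
  have h := Measure.integral_comp_mul_left (fun t => sinc t ^ 2) π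
  rw [integral_sinc_sq_pi_mul, abs_of_pos (inv_pos.2 pi_pos), smul_eq_mul,
    eq_inv_mul_iff_mul_eq₀ pi_ne_zero, mul_one] at h
  exact h.symm
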